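/- arXiv:1711.07723 — 4 statements merged into one kernel-verified Lean document; each statement's English description precedes it below -/
import Mathlib

section
/- Let b, d be positive reals and 0 < c < 1, and let h = h_{b,c,d}. Then for all integers m, n with 1 ≤ m < n, we have h(n)/h(m) > (n/m)^{bc·(log n)^{c−1}}. -/
/-!
Writing `x = log₂ n` and `y = log₂ m`, both sides are powers of `2`: the left one with exponent
`b c x^(c-1) (x - y)`, the right one with exponent `b (x^c - y^c)`. Since `t ↦ t^c` is strictly
concave, its graph lies strictly below its tangent at `x`, which is exactly the comparison of the
two exponents.
-/

/-- The function `h_{b,c,d}(n) = d·2^{b (log₂ n)^c}`. -/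
noncomputable def hf (b c d : ℝ) (n : ℕ) : ℝ :=
  d * (2 : ℝ) ^ (b * Real.logb 2 (n : ℝ) ^ c)

open Real

theorem Real.rpow_lt_rpow_add_mul_rpow_sub_one_mul_sub {x y c : ℝ} (hx : 0 < x) (hy : 0 ≤ y)
    (hyx : y ≠ x) (hc0 : 0 < c) (hc1 : c < 1) :
    y ^ c < x ^ c + c * x ^ (c - 1) * (y - x) := by
  have hxc : 0 < x ^ c := rpow_pos_of_pos hx c
  have bernoulli : (y / x) ^ c < 1 + c * (y / x - 1) := by
    have h := rpow_one_add_lt_one_add_mul_self (s := y / x - 1)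
      (by linarith [div_nonneg hy hx.le])
      (sub_ne_zero.mpr fun h => hyx ((div_eq_one_iff_eq hx.ne').mp h)) hc0 hc1
    rwa [add_sub_cancel] at h
  calc y ^ c = (y / x) ^ c * x ^ c := by rw [div_rpow hy hx.le, div_mul_cancel₀ _ hxc.ne']
    _ < (1 + c * (y / x - 1)) * x ^ c := mul_lt_mul_of_pos_right bernoulli hxc
    _ = x ^ c + c * x ^ (c - 1) * (y - x) := by
      rw [rpow_sub_one hx.ne']
      field_simp

theorem Real.div_eq_rpow_logb_sub {B u v : ℝ} (hB : 0 < B) (hB1 : B ≠ 1) (hu : 0 < u)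
    (hv : 0 < v) : u / v = B ^ (logb B u - logb B v) := by
  rw [← logb_div hu.ne' hv.ne', rpow_logb hB hB1 (div_pos hu hv)]

theorem hf_div_hf {b c d : ℝ} (hd : d ≠ 0) (m n : ℕ) :
    hf b c d n / hf b c d m = 2 ^ (b * (logb 2 n ^ c - logb 2 m ^ c)) := by
  rw [hf, hf, mul_div_mul_left _ _ hd, mul_sub, rpow_sub two_pos]

/-- For `h = h_{b,c,d}` with `b,d > 0` and `0 < c < 1`, and all
integers `1 ≤ m < n`, we have `h(n)/h(m) > (n/m)^{bc(log₂ n)^{c-1}}`. -/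
theorem statement4 (b c d : ℝ) (hb : 0 < b) (hd : 0 < d) (hc0 : 0 < c) (hc1 : c < 1)
    (m n : ℕ) (hm : 1 ≤ m) (hmn : m < n) :
    ((n : ℝ) / (m : ℝ)) ^ (b * c * Real.logb 2 (n : ℝ) ^ (c - 1)) <
      hf b c d n / hf b c d m := by
  have hm0 : (0 : ℝ) < m := by exact_mod_cast hm
  have hmn' : (m : ℝ) < n := by exact_mod_cast hmn
  have hy : 0 ≤ logb 2 (m : ℝ) := logb_nonneg one_lt_two (by exact_mod_cast hm)
  have hyx : logb 2 (m : ℝ) < logb 2 n := logb_lt_logb one_lt_two hm0 hmn'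
  have tangent := rpow_lt_rpow_add_mul_rpow_sub_one_mul_sub (hy.trans_lt hyx) hy hyx.ne hc0 hc1
  rw [hf_div_hf hd.ne', div_eq_rpow_logb_sub two_pos (by norm_num) (hm0.trans hmn') hm0,
    ← rpow_mul zero_le_two]
  apply rpow_lt_rpow_of_exponent_lt one_lt_two
  linarith [mul_lt_mul_of_pos_left tangent hb]
end

section
/- Let Q1 be the 3-by-4 0-1 matrix with rows (1,0,1,0), (1,0,0,1), (0,1,0,1). If m > 2n/u, then Q1 has a block-respecting embedding in every (4,u)-complete m-by-4n 0-1 matrix A. -/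
/-- The column of `Fin (k*n)` corresponding to position `c` within vertical block `j`. -/
def blockIdx {k n : ℕ} (j : Fin k) (c : Fin n) : Fin (k * n) :=
  ⟨(j : ℕ) * n + (c : ℕ), by
    have h1 : (j : ℕ) + 1 ≤ k := j.isLt
    have h2 : (c : ℕ) < n := c.isLt
    calc (j : ℕ) * n + (c : ℕ) < (j : ℕ) * n + n := by omega
      _ = ((j : ℕ) + 1) * n := by ring
      _ ≤ k * n := Nat.mul_le_mul_right n h1⟩

/-- An `m × (k*n)` 0-1 matrix is `(k,u)`-complete if every row has at least `u`
1-entries in each of the `k` vertical blocks. -/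
def KUComplete (k n u : ℕ) {m : ℕ} (A : Matrix (Fin m) (Fin (k * n)) Bool) : Prop :=
  ∀ (i : Fin m) (j : Fin k),
    u ≤ (Finset.univ.filter (fun c : Fin n => A i (blockIdx j c) = true)).card

/-- `Q` has a block-respecting embedding in `A`: there are a strictly increasing row map
and a column map sending column `j` of `Q` into the `j`-th vertical block of `A`. -/
def HasBlockEmb {l k m n : ℕ} (Q : Matrix (Fin l) (Fin k) Bool)
    (A : Matrix (Fin m) (Fin (k * n)) Bool) : Prop :=
  ∃ (f : Fin l → Fin m) (g : Fin k → Fin n),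
    StrictMono f ∧ ∀ i j, Q i j = true → A (f i) (blockIdx j (g j)) = true

def Q1 : Matrix (Fin 3) (Fin 4) Bool :=
  !![true, false, true, false; true, false, false, true; false, true, false, true]

/-!
A row `i` of `A` yields the middle row of a copy of `Q1` as soon as its support in the first
block meets that of some earlier row `i'` and its support in the last block meets that of some
later row `i''`: the shared columns serve as the first and last columns of `Q1`, and any
1-entries of `i''` in the second block and of `i'` in the third supply the other two.
The rows whose first-block support misses those of all earlier rows have pairwise disjoint
supports of size at least `u`, so there are at most `n / u` of them, and likewise for the last
block and later rows. Hence `m > 2n/u` leaves a row that fails neither condition.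
-/

open Finset

section DisjointFamilies

variable {ι α : Type*} [Fintype α]

theorem mul_card_le_card_of_pairwiseDisjoint {u : ℕ} {S : ι → Finset α} {L : Finset ι}
    (hL : (L : Set ι).PairwiseDisjoint S) (hS : ∀ i ∈ L, u ≤ #(S i)) :
    u * #L ≤ Fintype.card α := by
  classical
  calc u * #L = ∑ _i ∈ L, u := by rw [sum_const, smul_eq_mul, mul_comm]
    _ ≤ ∑ i ∈ L, #(S i) := sum_le_sum hS
    _ = #(L.biUnion S) := (card_biUnion hL).symm
    _ ≤ Fintype.card α := card_le_univ _

variable [LinearOrder ι]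

theorem mul_card_le_card_of_disjoint_earlier {u : ℕ} {S : ι → Finset α} (hS : ∀ i, u ≤ #(S i))
    {L : Finset ι} (hL : ∀ i ∈ L, ∀ j < i, Disjoint (S j) (S i)) :
    u * #L ≤ Fintype.card α := by
  refine mul_card_le_card_of_pairwiseDisjoint (fun i hi j hj hij => ?_) (fun i _ => hS i)
  rcases hij.lt_or_gt with h | h
  · exact hL j hj i h
  · exact (hL i hi j h).symm

variable [Fintype ι]

theorem exists_not_disjoint_earlier_and_later [DecidableEq α] {u : ℕ} {S T : ι → Finset α}
    (hS : ∀ i, u ≤ #(S i)) (hT : ∀ i, u ≤ #(T i)) (hcard : 2 * Fintype.card α < u * Fintype.card ι) :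
    ∃ i' i i'', i' < i ∧ i < i'' ∧ ¬Disjoint (S i') (S i) ∧ ¬Disjoint (T i) (T i'') := by
  let L : Finset ι := {i | ∀ j < i, Disjoint (S j) (S i)}
  let R : Finset ι := {i | ∀ j > i, Disjoint (T j) (T i)}
  have hL : u * #L ≤ Fintype.card α :=
    mul_card_le_card_of_disjoint_earlier hS fun i hi => (mem_filter.mp hi).2
  have hR : u * #R ≤ Fintype.card α := by
    have hR : ∀ i ∈ R, ∀ j > i, Disjoint (T j) (T i) := fun i hi => (mem_filter.mp hi).2
    exact mul_card_le_card_of_disjoint_earlier (ι := ιᵒᵈ) hT hR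
  obtain ⟨i, -, hi⟩ : ∃ i ∈ univ, i ∉ L ∪ R := by
    refine exists_mem_notMem_of_card_lt_card ?_
    have := card_union_le L R
    rw [card_univ]
    nlinarith
  simp only [mem_union, not_or, L, R, mem_filter_univ, not_forall] at hi
  obtain ⟨⟨i', hi', hS'⟩, ⟨i'', hi'', hT''⟩⟩ := hi
  exact ⟨i', i, i'', hi', hi'', hS', fun h => hT'' h.symm⟩

end DisjointFamilies

def blockSupport {m k n : ℕ} (A : Matrix (Fin m) (Fin (k * n)) Bool) (i : Fin m) (j : Fin k) :
    Finset (Fin n) :=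
  {c | A i (blockIdx j c) = true}

theorem mem_blockSupport {m k n : ℕ} {A : Matrix (Fin m) (Fin (k * n)) Bool} {i : Fin m}
    {j : Fin k} {c : Fin n} : c ∈ blockSupport A i j ↔ A i (blockIdx j c) = true := by
  simp [blockSupport]

theorem hasBlockEmb_Q1_of_entries {m n : ℕ} {A : Matrix (Fin m) (Fin (4 * n)) Bool}
    {i₁ i₂ i₃ : Fin m} (hi₁₂ : i₁ < i₂) (hi₂₃ : i₂ < i₃) {c₀ c₁ c₂ c₃ : Fin n}
    (hA₁₀ : A i₁ (blockIdx 0 c₀) = true) (hA₁₂ : A i₁ (blockIdx 2 c₂) = true)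
    (hA₂₀ : A i₂ (blockIdx 0 c₀) = true) (hA₂₃ : A i₂ (blockIdx 3 c₃) = true)
    (hA₃₁ : A i₃ (blockIdx 1 c₁) = true) (hA₃₃ : A i₃ (blockIdx 3 c₃) = true) :
    HasBlockEmb Q1 A := by
  refine ⟨![i₁, i₂, i₃], ![c₀, c₁, c₂, c₃], ?_, ?_⟩
  · intro a b hab
    fin_cases a <;> fin_cases b <;> first
      | exact absurd hab (by decide)
      | exact hi₁₂
      | exact hi₂₃
      | exact hi₁₂.trans hi₂₃
  · intro a b hab
    fin_cases a <;> fin_cases b <;> first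
      | exact absurd hab (by decide)
      | assumption

/-- If `m > 2n/u`, then `Q1` has a block-respecting embedding in every
`(4,u)`-complete `m × 4n` 0-1 matrix `A`. -/
theorem statement6 (m n u : ℕ) (hu : 0 < u)
    (A : Matrix (Fin m) (Fin (4 * n)) Bool)
    (hA : KUComplete 4 n u A)
    (hm : 2 * (n : ℝ) / (u : ℝ) < (m : ℝ)) :
    HasBlockEmb Q1 A := by
  have hcard : 2 * Fintype.card (Fin n) < u * Fintype.card (Fin m) := by
    rw [div_lt_iff₀ (by exact_mod_cast hu)] at hm
    simp only [Fintype.card_fin]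
    exact_mod_cast (show 2 * (n : ℝ) < u * m by linarith)
  obtain ⟨i', i, i'', hi', hi'', hS, hT⟩ := exists_not_disjoint_earlier_and_later
    (S := fun i => blockSupport A i 0) (T := fun i => blockSupport A i 3)
    (fun i => hA i 0) (fun i => hA i 3) hcard
  obtain ⟨c₀, h₁₀, h₂₀⟩ := not_disjoint_iff.mp hS
  obtain ⟨c₃, h₂₃, h₃₃⟩ := not_disjoint_iff.mp hT
  obtain ⟨c₁, h₃₁⟩ := card_pos.mp (hu.trans_le (hA i'' 1))
  obtain ⟨c₂, h₁₂⟩ := card_pos.mp (hu.trans_le (hA i' 2))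
  exact hasBlockEmb_Q1_of_entries hi' hi'' (mem_blockSupport.mp h₁₀) (mem_blockSupport.mp h₁₂)
    (mem_blockSupport.mp h₂₀) (mem_blockSupport.mp h₂₃) (mem_blockSupport.mp h₃₁)
    (mem_blockSupport.mp h₃₃)
end

section
/- Every vertically degenerate 0-1 matrix is acyclic; that is, a vertically degenerate 0-1 matrix contains no submatrix P' such that every row and every column of P' contains at least two 1-entries. -/
/-!
Work with finite sets of rows `R` and columns `C`, and call `(R, C)` a core when every row of the
submatrix `R × C` has two 1-entries in `C` and every column two 1-entries in `R`. As for graphs with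
at least as many edges as vertices, a submatrix whose weight is at least its number of rows plus
columns contains a core: delete a line with at most one 1-entry and recurse.

Take a core with the fewest rows. It has at least two rows, so vertical separability splits them
into a top part `R₁` and the rest, with at most one column having 1-entries in both. On `R₁` and the
columns `C₁` meeting `R₁`, every row and all columns but one keep two 1-entries, so the weight is at
least `#R₁ + #C₁`, and this smaller submatrix contains a core with fewer rows.
-/

/-- The weight of a 0-1 matrix: the number of its 1-entries. -/
def wt {l k : ℕ} (P : Matrix (Fin l) (Fin k) Bool) : ℕ :=
  (Finset.univ.filter (fun p : Fin l × Fin k => P p.1 p.2 = true)).card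

/-- `P` is vertically separable at `a`: at most one column has 1-entries both among
the first `a` rows and among the remaining rows. -/
def VSepAt {l k : ℕ} (a : ℕ) (P : Matrix (Fin l) (Fin k) Bool) : Prop :=
  ∀ y₁ y₂ : Fin k,
    ((∃ x : Fin l, (x : ℕ) < a ∧ P x y₁ = true) ∧ (∃ x : Fin l, a ≤ (x : ℕ) ∧ P x y₁ = true)) →
    ((∃ x : Fin l, (x : ℕ) < a ∧ P x y₂ = true) ∧ (∃ x : Fin l, a ≤ (x : ℕ) ∧ P x y₂ = true)) →
    y₁ = y₂

/-- `P` is vertically separable. -/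
def VSep {l k : ℕ} (P : Matrix (Fin l) (Fin k) Bool) : Prop :=
  ∃ a : ℕ, 1 ≤ a ∧ a < l ∧ VSepAt a P

/-- `P` is vertically degenerate: every (nonempty) submatrix either has a single row
or is vertically separable. -/
def VDeg {l k : ℕ} (P : Matrix (Fin l) (Fin k) Bool) : Prop :=
  ∀ (l' k' : ℕ) (f : Fin l' → Fin l) (g : Fin k' → Fin k),
    StrictMono f → StrictMono g → 1 ≤ l' → 1 ≤ k' →
      l' = 1 ∨ VSep (fun i j => P (f i) (g j))

/-- `P` is acyclic: it has no (nonempty) submatrix in which every row and every column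
has at least two 1-entries. -/
def MatAcyclic {l k : ℕ} (P : Matrix (Fin l) (Fin k) Bool) : Prop :=
  ¬ ∃ (l' k' : ℕ) (f : Fin l' → Fin l) (g : Fin k' → Fin k),
      1 ≤ l' ∧ 1 ≤ k' ∧ StrictMono f ∧ StrictMono g ∧
      (∀ i : Fin l', 2 ≤ (Finset.univ.filter (fun j : Fin k' => P (f i) (g j) = true)).card) ∧
      (∀ j : Fin k', 2 ≤ (Finset.univ.filter (fun i : Fin l' => P (f i) (g j) = true)).card)

open Finset

namespace ZeroOneMatrix

variable {α β : Type*} (P : α → β → Bool)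

def weight (R : Finset α) (C : Finset β) : ℕ := ∑ x ∈ R, #{y ∈ C | P x y}

def IsCore (R : Finset α) (C : Finset β) : Prop :=
  R.Nonempty ∧ (∀ x ∈ R, 2 ≤ #{y ∈ C | P x y}) ∧ ∀ y ∈ C, 2 ≤ #{x ∈ R | P x y}

def crossingCols (R₁ R₂ : Finset α) (C : Finset β) : Finset β :=
  {y ∈ C | (∃ x ∈ R₁, P x y) ∧ ∃ x ∈ R₂, P x y}

variable {P}

theorem mem_crossingCols {R₁ R₂ : Finset α} {C : Finset β} {y : β} :
    y ∈ crossingCols P R₁ R₂ C ↔ y ∈ C ∧ (∃ x ∈ R₁, P x y) ∧ ∃ x ∈ R₂, P x y :=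
  mem_filter

theorem weight_eq_sum_cols (R : Finset α) (C : Finset β) :
    weight P R C = ∑ y ∈ C, #{x ∈ R | P x y} := by
  simp only [weight, card_filter]
  exact sum_comm

theorem weight_eq_add_erase_row [DecidableEq α] {R : Finset α} {x : α} (hx : x ∈ R)
    (C : Finset β) : weight P R C = #{y ∈ C | P x y} + weight P (R.erase x) C :=
  (add_sum_erase R _ hx).symm

theorem weight_eq_add_erase_col [DecidableEq β] (R : Finset α) {C : Finset β} {y : β}
    (hy : y ∈ C) : weight P R C = #{x ∈ R | P x y} + weight P R (C.erase y) := by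
  rw [weight_eq_sum_cols, weight_eq_sum_cols]
  exact (add_sum_erase C _ hy).symm

theorem exists_isCore_of_card_add_card_le_weight [DecidableEq α] [DecidableEq β]
    (R : Finset α) (C : Finset β) (hw : #R + #C ≤ weight P R C) (hpos : 0 < weight P R C) :
    ∃ R' ⊆ R, ∃ C' ⊆ C, IsCore P R' C' := by
  induction h : #R + #C generalizing R C with
  | zero =>
    obtain rfl : R = ∅ := card_eq_zero.mp (by omega)
    simp [weight] at hpos
  | succ n ih =>
    obtain ⟨x₀, hx₀, hx₀C⟩ := exists_ne_zero_of_sum_ne_zero hpos.ne'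
    obtain ⟨y₀, hy₀⟩ := card_ne_zero.mp hx₀C
    have hR : 1 ≤ #R := card_pos.mpr ⟨x₀, hx₀⟩
    have hC : 1 ≤ #C := card_pos.mpr ⟨y₀, (mem_filter.mp hy₀).1⟩
    by_cases hrow : ∃ x ∈ R, #{y ∈ C | P x y} ≤ 1
    · obtain ⟨x, hx, hdeg⟩ := hrow
      have hwt := weight_eq_add_erase_row (P := P) hx C
      have hcard := card_erase_of_mem hx
      obtain ⟨R', hR', C', hC', hcore⟩ := ih (R.erase x) C (by omega) (by omega) (by omega)
      exact ⟨R', hR'.trans (erase_subset x R), C', hC', hcore⟩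
    by_cases hcol : ∃ y ∈ C, #{x ∈ R | P x y} ≤ 1
    · obtain ⟨y, hy, hdeg⟩ := hcol
      have hwt := weight_eq_add_erase_col (P := P) R hy
      have hcard := card_erase_of_mem hy
      obtain ⟨R', hR', C', hC', hcore⟩ := ih R (C.erase y) (by omega) (by omega) (by omega)
      exact ⟨R', hR', C', hC'.trans (erase_subset y C), hcore⟩
    push Not at hrow hcol
    exact ⟨R, subset_rfl, C, subset_rfl, ⟨x₀, hx₀⟩, hrow, hcol⟩

namespace IsCore

variable {R : Finset α} {C : Finset β}

theorem two_le_card_rows (h : IsCore P R C) : 2 ≤ #R := by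
  obtain ⟨x, hx⟩ := h.1
  obtain ⟨y, hy⟩ := card_pos.mp (zero_lt_two.trans_le (h.2.1 x hx))
  exact (h.2.2 y (mem_filter.mp hy).1).trans (card_filter_le R _)

theorem cols_nonempty (h : IsCore P R C) : C.Nonempty := by
  obtain ⟨x, hx⟩ := h.1
  exact (card_pos.mp (zero_lt_two.trans_le (h.2.1 x hx))).mono (filter_subset _ C)

theorem exists_isCore_of_card_crossingCols_le_one [DecidableEq α] [DecidableEq β]
    {R₁ : Finset α} (h : IsCore P R C) (hR₁ : R₁ ⊆ R) (hne : R₁.Nonempty)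
    (hcross : #(crossingCols P R₁ (R \ R₁) C) ≤ 1) :
    ∃ R' ⊆ R₁, ∃ C', IsCore P R' C' := by
  set C₁ : Finset β := {y ∈ C | ∃ x ∈ R₁, P x y}
  have hrows : ∀ x ∈ R₁, 2 ≤ #{y ∈ C₁ | P x y} := by
    intro x hx
    refine (h.2.1 x (hR₁ hx)).trans (card_le_card fun y hy => ?_)
    simp only [C₁, mem_filter] at hy ⊢
    exact ⟨⟨hy.1, x, hx, hy.2⟩, hy.2⟩
  -- the one crossing column may meet `R₁` only once, so it is charged an extra unit
  have hcols : ∀ y ∈ C₁,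
      2 ≤ #{x ∈ R₁ | P x y} + if y ∈ crossingCols P R₁ (R \ R₁) C then 1 else 0 := by
    intro y hy
    obtain ⟨hyC, x₁, hx₁, hPx₁⟩ := mem_filter.mp hy
    split_ifs with hyc
    · have : 0 < #{x ∈ R₁ | P x y} := card_pos.mpr ⟨x₁, mem_filter.mpr ⟨hx₁, hPx₁⟩⟩
      omega
    · refine (h.2.2 y hyC).trans (card_le_card fun x hx => ?_) |>.trans le_self_add
      obtain ⟨hxR, hPx⟩ := mem_filter.mp hx
      refine mem_filter.mpr ⟨?_, hPx⟩
      by_contra hxR₁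
      exact hyc (mem_crossingCols.mpr ⟨hyC, ⟨x₁, hx₁, hPx₁⟩, x, mem_sdiff.mpr ⟨hxR, hxR₁⟩, hPx⟩)
  have hwt_rows : 2 * #R₁ ≤ weight P R₁ C₁ := by
    have := card_nsmul_le_sum R₁ _ 2 hrows
    rw [smul_eq_mul] at this
    rw [weight]
    omega
  have hwt_cols : 2 * #C₁ ≤ weight P R₁ C₁ + 1 := by
    have hsub : #{y ∈ C₁ | y ∈ crossingCols P R₁ (R \ R₁) C} ≤ 1 :=
      (card_le_card fun y hy => (mem_filter.mp hy).2).trans hcross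
    have := card_nsmul_le_sum C₁ _ 2 hcols
    rw [sum_add_distrib, sum_boole, Nat.cast_id, ← weight_eq_sum_cols, smul_eq_mul] at this
    omega
  have hpos : 0 < #R₁ := card_pos.mpr hne
  obtain ⟨R', hR', C', -, hcore⟩ :=
    exists_isCore_of_card_add_card_le_weight (P := P) R₁ C₁ (by omega) (by omega)
  exact ⟨R', hR', C', hcore⟩

end IsCore

end ZeroOneMatrix

open ZeroOneMatrix

theorem VDeg.exists_card_crossingCols_le_one {l k : ℕ} {P : Matrix (Fin l) (Fin k) Bool}
    (hP : VDeg P) {R : Finset (Fin l)} {C : Finset (Fin k)} (hR : 2 ≤ #R) (hC : C.Nonempty) :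
    ∃ R₁ ⊂ R, R₁.Nonempty ∧ #(crossingCols P R₁ (R \ R₁) C) ≤ 1 := by
  set f := R.orderEmbOfFin rfl
  set g := C.orderEmbOfFin rfl
  obtain h1 | ⟨a, ha₁, ha, hsep⟩ :=
    hP #R #C f g f.strictMono g.strictMono (by omega) hC.card_pos
  · omega
  set R₁ := ({i | (i : ℕ) < a} : Finset (Fin #R)).map f.toEmbedding
  have mem_R₁ : ∀ i, f i ∈ R₁ ↔ (i : ℕ) < a := by simp [R₁]
  have hR₁R : R₁ ⊆ R := fun x hx => by
    obtain ⟨i, -, rfl⟩ := mem_map.mp hx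
    exact R.orderEmbOfFin_mem rfl i
  have hcross : ∀ y ∈ crossingCols P R₁ (R \ R₁) C, ∃ j, g j = y ∧
      (∃ i : Fin #R, (i : ℕ) < a ∧ P (f i) (g j) = true) ∧
      ∃ i : Fin #R, a ≤ (i : ℕ) ∧ P (f i) (g j) = true := by
    intro y hy
    obtain ⟨hyC, ⟨x₁, hx₁, hP₁⟩, ⟨x₂, hx₂, hP₂⟩⟩ := mem_crossingCols.mp hy
    obtain ⟨j, rfl⟩ : y ∈ Set.range g := by rwa [C.range_orderEmbOfFin]
    obtain ⟨i₁, rfl⟩ : x₁ ∈ Set.range f := by rw [R.range_orderEmbOfFin]; exact hR₁R hx₁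
    obtain ⟨hx₂R, hx₂R₁⟩ := mem_sdiff.mp hx₂
    obtain ⟨i₂, rfl⟩ : x₂ ∈ Set.range f := by rwa [R.range_orderEmbOfFin]
    exact ⟨j, rfl, ⟨i₁, (mem_R₁ i₁).mp hx₁, hP₁⟩, ⟨i₂, by simpa [mem_R₁] using hx₂R₁, hP₂⟩⟩
  refine ⟨R₁, (ssubset_iff_of_subset hR₁R).mpr ⟨f ⟨a, ha⟩, R.orderEmbOfFin_mem rfl _, ?_⟩,
    ⟨f ⟨0, by omega⟩, (mem_R₁ _).mpr ha₁⟩, card_le_one.mpr fun y₁ hy₁ y₂ hy₂ => ?_⟩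
  · simp [mem_R₁]
  · obtain ⟨j₁, rfl, hj₁⟩ := hcross y₁ hy₁
    obtain ⟨j₂, rfl, hj₂⟩ := hcross y₂ hy₂
    rw [hsep j₁ j₂ hj₁ hj₂]

theorem exists_isCore_of_not_matAcyclic {l k : ℕ} {P : Matrix (Fin l) (Fin k) Bool}
    (h : ¬ MatAcyclic P) : ∃ R C, IsCore P R C := by
  obtain ⟨l', k', f, g, hl', -, hf, hg, hrow, hcol⟩ := not_not.mp h
  set f' : Fin l' ↪ Fin l := ⟨f, hf.injective⟩
  set g' : Fin k' ↪ Fin k := ⟨g, hg.injective⟩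
  refine ⟨univ.map f', univ.map g', (univ_nonempty_iff.mpr ⟨⟨0, hl'⟩⟩).map, ?_, ?_⟩
  · simp only [mem_map, mem_univ, true_and, forall_exists_index, forall_apply_eq_imp_iff]
    intro i
    simpa [f', g', filter_map] using hrow i
  · simp only [mem_map, mem_univ, true_and, forall_exists_index, forall_apply_eq_imp_iff]
    intro j
    simpa [f', g', filter_map] using hcol j

theorem not_isCore_of_vDeg {l k : ℕ} {P : Matrix (Fin l) (Fin k) Bool} (hP : VDeg P)
    (R : Finset (Fin l)) (C : Finset (Fin k)) : ¬ IsCore P R C := by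
  induction R using Finset.strongInduction generalizing C with
  | H R ih =>
    intro hcore
    obtain ⟨R₁, hR₁, hne, hcross⟩ :=
      hP.exists_card_crossingCols_le_one hcore.two_le_card_rows hcore.cols_nonempty
    obtain ⟨R', hR', C', hcore'⟩ :=
      hcore.exists_isCore_of_card_crossingCols_le_one hR₁.subset hne hcross
    exact ih R' (hR'.trans_ssubset hR₁) C' hcore'

/-- Every vertically degenerate 0-1 matrix is acyclic: it contains no
submatrix in which every row and every column contains at least two 1-entries. -/
theorem statement10 {l k : ℕ} (P : Matrix (Fin l) (Fin k) Bool) (hdeg : VDeg P) :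
    MatAcyclic P := by
  by_contra h
  obtain ⟨R, C, hcore⟩ := exists_isCore_of_not_matAcyclic h
  exact not_isCore_of_vDeg hdeg R C hcore
end

section
/- Let h = h_{b,c,d} with positive reals b, d and 0 < c < 1, let k ≥ 2, and let A be an n-by-n 0-1 matrix such that w(A) > n·h(n) and every proper submatrix of A is h-sparse. Set x = bc·(log n)^{c−1}, n* = ⌊n/(6k)^{1/x}⌋, α = ⌊n/n*⌋, m* = ⌈n/α^k⌉ and u* = ⌈h(n*)/α⌉, and assume x ≤ 1, n* ≥ 1 and α ≥ k. Then A contains an m*-by-kn* submatrix C (obtained by selecting m* rows of A and k disjoint blocks of n* consecutive columns each) that is (k,u*)-complete. -/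
/-- A 0-1 matrix is `h`-sparse if every `p × p` submatrix has weight at most `p·h(p)`. -/
def HSparse {m n : ℕ} (h : ℕ → ℝ) (A : Matrix (Fin m) (Fin n) Bool) : Prop :=
  ∀ (p : ℕ), 1 ≤ p → ∀ (f : Fin p → Fin m) (g : Fin p → Fin n),
    StrictMono f → StrictMono g →
      (wt (fun i j => A (f i) (g j)) : ℝ) ≤ (p : ℝ) * h p

open Finset

section Weight

variable {ι κ : Type*}

def wtOn (A : Matrix ι κ Bool) (R : Finset ι) (C : Finset κ) : ℕ :=
  #{p ∈ R ×ˢ C | A p.1 p.2 = true}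

lemma wtOn_eq_sum (A : Matrix ι κ Bool) (R : Finset ι) (C : Finset κ) :
    wtOn A R C = ∑ i ∈ R, #{j ∈ C | A i j = true} := by
  simp only [wtOn, card_filter, sum_product]

lemma wtOn_transpose (A : Matrix ι κ Bool) (R : Finset ι) (C : Finset κ) :
    wtOn (fun j i => A i j) C R = wtOn A R C :=
  card_nbij' Prod.swap Prod.swap (by simp [Set.MapsTo, and_comm]) (by simp [Set.MapsTo, and_comm])
    (by simp [Set.LeftInvOn]) (by simp [Set.RightInvOn, Set.LeftInvOn])

lemma wtOn_empty_left (A : Matrix ι κ Bool) (C : Finset κ) : wtOn A ∅ C = 0 := by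
  simp [wtOn]

lemma wtOn_le_add_of_subset_union [DecidableEq κ] (A : Matrix ι κ Bool) (R : Finset ι)
    {C C₁ C₂ : Finset κ} (h : C ⊆ C₁ ∪ C₂) : wtOn A R C ≤ wtOn A R C₁ + wtOn A R C₂ := by
  simp only [wtOn_eq_sum, ← sum_add_distrib]
  refine sum_le_sum fun i _ => (card_le_card ?_).trans (card_union_le _ _)
  rw [← filter_union]
  exact filter_subset_filter _ h

lemma wtOn_le_sum_of_subset_biUnion [DecidableEq κ] (A : Matrix ι κ Bool) (R : Finset ι)
    {σ : Type*} {C : Finset κ} {s : Finset σ} {D : σ → Finset κ} (h : C ⊆ s.biUnion D) :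
    wtOn A R C ≤ ∑ j ∈ s, wtOn A R (D j) := by
  simp only [wtOn_eq_sum]
  rw [sum_comm]
  refine sum_le_sum fun i _ => (card_le_card ?_).trans card_biUnion_le
  rw [← filter_biUnion]
  exact filter_subset_filter _ h

lemma wtOn_le_wtOn_rich_add (A : Matrix ι κ Bool) (R : Finset ι) (C : Finset κ) (u : ℕ) :
    wtOn A R C ≤ wtOn A {i ∈ R | u ≤ #{j ∈ C | A i j = true}} C + #R * (u - 1) := by
  rw [wtOn_eq_sum, wtOn_eq_sum,
    ← sum_filter_add_sum_filter_not R (fun i => u ≤ #{j ∈ C | A i j = true})]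
  gcongr
  refine (sum_le_card_nsmul _ _ (u - 1) fun i hi => ?_).trans ?_
  · have := (mem_filter.1 hi).2
    omega
  · exact Nat.mul_le_mul_right _ (card_filter_le _ _)

end Weight

section Squares

variable {ι κ : Type*} {h : ℕ → ℝ} {A : Matrix ι κ Bool}

-- Peel off squares; once fewer than `2 #R` columns remain, two overlapping squares cover them.
lemma wtOn_le_of_card_le {R : Finset ι} (hh : 0 ≤ h #R) (C : Finset κ) (hRC : #R ≤ #C)
    (hsq : ∀ C' ⊆ C, #C' = #R → (wtOn A R C' : ℝ) ≤ #R * h #R) :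
    (wtOn A R C : ℝ) ≤ (#C + #R) * h #R := by
  classical
  rcases R.eq_empty_or_nonempty with rfl | hR
  · simp only [wtOn_empty_left, Nat.cast_zero, card_empty]
    positivity
  induction C using strongInduction with
  | H C ih =>
  obtain ⟨C₁, hC₁, hC₁R⟩ := exists_subset_card_eq hRC
  have hrest : #(C \ C₁) = #C - #R := by rw [card_sdiff_of_subset hC₁, hC₁R]
  have hsplit : (wtOn A R C : ℝ) ≤ wtOn A R C₁ + wtOn A R (C \ C₁) := mod_cast
    wtOn_le_add_of_subset_union A R (by rw [union_sdiff_of_subset hC₁])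
  have h₁ := hsq C₁ hC₁ hC₁R
  by_cases hbig : #R ≤ #C - #R
  · have h₂ := ih (C \ C₁) (sdiff_ssubset hC₁ (card_pos.1 (hC₁R ▸ hR.card_pos)))
      (hrest ▸ hbig) fun C' hC' => hsq C' (hC'.trans sdiff_subset)
    rw [hrest, Nat.cast_sub (by omega)] at h₂
    linarith
  · obtain ⟨C₂, hC₂, hC₂C, hC₂R⟩ := exists_subsuperset_card_eq (sdiff_subset (s := C) (t := C₁))
      (by omega) hRC
    have h₂ := hsq C₂ hC₂C hC₂R
    have hcover : (wtOn A R C : ℝ) ≤ wtOn A R C₁ + wtOn A R C₂ := mod_cast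
      wtOn_le_add_of_subset_union A R fun x hx => by
        by_cases x ∈ C₁ <;> simp_all [subset_iff]
    have : (#R : ℝ) ≤ #C := mod_cast hRC
    nlinarith

lemma wtOn_le_of_squares (R : Finset ι) (C : Finset κ)
    (hh : 0 ≤ h (min #R #C))
    (hsq : ∀ R' ⊆ R, ∀ C' ⊆ C, #R' = min #R #C → #C' = min #R #C →
      (wtOn A R' C' : ℝ) ≤ min #R #C * h (min #R #C)) :
    (wtOn A R C : ℝ) ≤ (#R + #C) * h (min #R #C) := by
  rcases le_total #R #C with hRC | hCR
  · rw [min_eq_left hRC] at hh hsq ⊢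
    rw [add_comm]
    exact wtOn_le_of_card_le hh C hRC fun C' hC' hC'R => hsq R subset_rfl C' hC' rfl hC'R
  · rw [min_eq_right hCR] at hh hsq ⊢
    rw [← wtOn_transpose]
    exact wtOn_le_of_card_le hh R hCR fun R' hR' hR'C => by
      rw [wtOn_transpose]
      exact hsq R' hR' C subset_rfl hR'C rfl

end Squares

lemma wt_eq_wtOn_univ {l m : ℕ} (A : Matrix (Fin l) (Fin m) Bool) : wt A = wtOn A univ univ := by
  rw [wt, wtOn, univ_product_univ]

lemma wt_submatrix_orderEmbOfFin {α β : Type*} [LinearOrder α] [LinearOrder β]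
    (A : Matrix α β Bool) {R : Finset α} {C : Finset β} {p q : ℕ} (hR : #R = p) (hC : #C = q) :
    wt (fun i j => A (R.orderEmbOfFin hR i) (C.orderEmbOfFin hC j)) = wtOn A R C := by
  refine card_nbij (Prod.map (R.orderEmbOfFin hR) (C.orderEmbOfFin hC)) ?_ ?_ ?_
  · intro x hx
    simp_all
  · exact ((R.orderEmbOfFin hR).injective.prodMap (C.orderEmbOfFin hC).injective).injOn
  · rintro ⟨x, y⟩ hxy
    simp only [coe_filter, mem_product, Set.mem_ofPred_eq] at hxy
    obtain ⟨⟨hx, hy⟩, hA⟩ := hxy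
    obtain ⟨i, rfl⟩ : x ∈ Set.range (R.orderEmbOfFin hR) := by simpa using hx
    obtain ⟨j, rfl⟩ : y ∈ Set.range (C.orderEmbOfFin hC) := by simpa using hy
    exact ⟨(i, j), by simpa using hA, rfl⟩

section Proper

variable {n : ℕ} {h : ℕ → ℝ} {A : Matrix (Fin n) (Fin n) Bool}

def ProperHSparse (h : ℕ → ℝ) (A : Matrix (Fin n) (Fin n) Bool) : Prop :=
  ∀ (r₁ r₂ : ℕ) (f : Fin r₁ → Fin n) (g : Fin r₂ → Fin n),
    StrictMono f → StrictMono g → (r₁ < n ∨ r₂ < n) → HSparse h (fun i j => A (f i) (g j))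

lemma ProperHSparse.wtOn_le (hsp : ProperHSparse h A) {R C : Finset (Fin n)} (hRC : #R = #C)
    (hR : #R < n) :
    (wtOn A R C : ℝ) ≤ #R * h #R := by
  rcases (#R).eq_zero_or_pos with h0 | hpos
  · simp [card_eq_zero.1 h0, wtOn_empty_left]
  have := hsp _ _ _ _ (R.orderEmbOfFin rfl).strictMono (C.orderEmbOfFin hRC.symm).strictMono
    (Or.inl hR) (#R) hpos id id strictMono_id strictMono_id
  rwa [← wt_submatrix_orderEmbOfFin A rfl hRC.symm]

lemma ProperHSparse.wtOn_le_of_card_le (hsp : ProperHSparse h A) (hmono : Monotone h)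
    (hnonneg : ∀ p, 0 ≤ h p) {w : ℕ} (hw : w < n)
    (R : Finset (Fin n)) {C : Finset (Fin n)} (hC : #C ≤ w) :
    (wtOn A R C : ℝ) ≤ (#R + w) * h w := by
  have hmin : min #R #C ≤ w := (min_le_right _ _).trans hC
  calc (wtOn A R C : ℝ) ≤ (#R + #C) * h (min #R #C) :=
        wtOn_le_of_squares R C (hnonneg _) fun R' _ C' _ hR' hC' => by
          rw [← hR']
          exact hsp.wtOn_le (hR'.trans hC'.symm) (by omega)
    _ ≤ (#R + w) * h w :=
        mul_le_mul (by gcongr) (hmono hmin) (hnonneg _) (by positivity)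

end Proper

section Windows

variable {n : ℕ}

def window (s w : ℕ) : Finset (Fin n) := {c | s ≤ (c : ℕ) ∧ (c : ℕ) < s + w}

lemma card_filter_window (P : Fin n → Prop) [DecidablePred P] {s w : ℕ} (hsw : s + w ≤ n) :
    #{cc : Fin w | P ⟨s + cc, by have := cc.isLt; omega⟩} = #{c ∈ window s w | P c} := by
  refine card_nbij (fun cc => ⟨s + cc, by have := cc.isLt; omega⟩) ?_ ?_ ?_
  · intro cc hcc
    simp_all [window]
  · intro a _ b _ hab
    simpa [Fin.ext_iff] using hab
  · intro c hc
    simp only [window, coe_filter, mem_filter, mem_univ, true_and, Set.mem_ofPred_eq] at hc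
    refine ⟨⟨c - s, by omega⟩, ?_, by ext; simp; omega⟩
    simpa [show s + (c - s) = c by omega] using hc.2

lemma card_window {s w : ℕ} (hsw : s + w ≤ n) : #(window s w : Finset (Fin n)) = w := by
  simpa using (card_filter_window (fun _ => True) hsw).symm

lemma univ_subset_windows {n' : ℕ} (hn' : 0 < n') (α : ℕ) :
    (univ : Finset (Fin n)) ⊆
      (range α).biUnion (fun j => window (j * n') n') ∪ window (α * n') (n - α * n') := by
  intro c _
  simp only [mem_union, mem_biUnion, mem_range, window, mem_filter, mem_univ, true_and]
  by_cases hc : (c : ℕ) < α * n'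
  · exact Or.inl ⟨c / n', Nat.div_lt_of_lt_mul (by rwa [mul_comm]),
      Nat.div_mul_le_self _ _, Nat.lt_div_mul_add hn'⟩
  · exact Or.inr ⟨by omega, by omega⟩

end Windows

section Strips

variable {n : ℕ}

def richWindows (A : Matrix (Fin n) (Fin n) Bool) (w α u : ℕ) (i : Fin n) : Finset ℕ :=
  {j ∈ range α | u ≤ #{c ∈ window (j * w) w | A i c = true}}

variable {n' α u : ℕ} {h : ℕ → ℝ} {A : Matrix (Fin n) (Fin n) Bool}

lemma wtOn_window_le (hsp : ProperHSparse h A) (hmono : Monotone h) (hnonneg : ∀ p, 0 ≤ h p)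
    (hn'n : n' < n) {s : ℕ} (hs : s + n' ≤ n) :
    (wtOn A univ (window s n') : ℝ) ≤
      (#{i | u ≤ #{c ∈ window s n' | A i c = true}} + n') * h n' + n * (u - 1 : ℕ) := by
  have hrich : (wtOn A univ (window s n') : ℝ) ≤
      wtOn A {i | u ≤ #{c ∈ window s n' | A i c = true}} (window s n') + n * (u - 1 : ℕ) := by
    have := wtOn_le_wtOn_rich_add A univ (window s n') u
    rw [card_univ, Fintype.card_fin] at this
    exact_mod_cast this
  have := hsp.wtOn_le_of_card_le hmono hnonneg hn'n
    {i | u ≤ #{c ∈ window s n' | A i c = true}} (card_window hs).le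
  linarith

lemma wt_le_of_richWindows (hsp : ProperHSparse h A) (hmono : Monotone h)
    (hnonneg : ∀ p, 0 ≤ h p) (hn' : 0 < n') (hn'n : n' < n) (hα : α * n' ≤ n)
    (hαsucc : n < α * n' + n') (hu : (α : ℝ) * (u - 1 : ℕ) ≤ h n') :
    (wt A : ℝ) ≤ (∑ i, #(richWindows A n' α u i) + 4 * n) * h n' := by
  have hcover : (wt A : ℝ) ≤ ∑ j ∈ range α, (wtOn A univ (window (j * n') n') : ℝ)
      + wtOn A univ (window (α * n') (n - α * n')) := by
    rw [wt_eq_wtOn_univ]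
    exact_mod_cast (wtOn_le_add_of_subset_union A univ (univ_subset_windows hn' α)).trans
      (Nat.add_le_add_right (wtOn_le_sum_of_subset_biUnion A univ subset_rfl) _)
  have hstrips := sum_le_sum fun j (hj : j ∈ range α) =>
    wtOn_window_le (u := u) hsp hmono hnonneg hn'n
      ((Nat.succ_mul j n' ▸ Nat.mul_le_mul_right n' (mem_range.1 hj)).trans hα)
  have hleft := hsp.wtOn_le_of_card_le hmono hnonneg hn'n univ
    (C := window (α * n') (n - α * n')) (by rw [card_window (by omega)]; omega)
  have hpairs : ∑ j ∈ range α, (#{i | u ≤ #{c ∈ window (j * n') n' | A i c = true}} : ℝ) =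
      ∑ i, (#(richWindows A n' α u i) : ℝ) :=
    mod_cast sum_card_bipartiteAbove_eq_sum_card_bipartiteBelow _
  rw [sum_add_distrib, ← sum_mul, sum_add_distrib, sum_const, card_range, sum_const, card_range,
    nsmul_eq_mul, nsmul_eq_mul, hpairs] at hstrips
  rw [card_univ, Fintype.card_fin] at hleft
  have hαR : (α : ℝ) * n' ≤ n := mod_cast hα
  have hn'R : (n' : ℝ) ≤ n := mod_cast hn'n.le
  have hh := hnonneg n'
  push_cast at hstrips ⊢
  nlinarith

end Strips

section Growth

lemma rpow_le_rpow_add_mul_sub {c l L : ℝ} (hc0 : 0 ≤ c) (hc1 : c ≤ 1) (hl : 0 ≤ l)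
    (hL : 0 < L) : l ^ c ≤ L ^ c + c * L ^ (c - 1) * (l - L) := by
  have hB := rpow_one_add_le_one_add_mul_self (s := l / L - 1)
    (by linarith [div_nonneg hl hL.le]) hc0 hc1
  have hLc := Real.rpow_pos_of_pos hL c
  rw [add_sub_cancel, Real.div_rpow hl hL.le, div_le_iff₀ hLc] at hB
  rw [Real.rpow_sub_one hL.ne']
  calc l ^ c ≤ (1 + c * (l / L - 1)) * L ^ c := hB
    _ = L ^ c + c * (L ^ c / L) * (l - L) := by field_simp

lemma hf_pos {b c d : ℝ} (hd : 0 < d) (p : ℕ) : 0 < hf b c d p := by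
  unfold hf
  positivity

lemma hf_monotone {b c d : ℝ} (hb : 0 ≤ b) (hc : 0 ≤ c) (hd : 0 ≤ d) : Monotone (hf b c d) := by
  intro p q hpq
  have hlogb_nonneg (m : ℕ) : 0 ≤ Real.logb 2 (m : ℝ) :=
    div_nonneg (Real.log_natCast_nonneg m) (Real.log_nonneg one_le_two)
  have := hlogb_nonneg p
  have hlog : Real.logb 2 (p : ℝ) ≤ Real.logb 2 q := by
    rcases p.eq_zero_or_pos with rfl | hp
    · simpa using hlogb_nonneg q
    · exact Real.logb_le_logb_of_le one_lt_two (by positivity) (by exact_mod_cast hpq)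
  unfold hf
  gcongr
  norm_num

lemma mul_hf_le_hf {b c d K : ℝ} (hb : 0 < b) (hd : 0 ≤ d) (hc0 : 0 < c) (hc1 : c ≤ 1)
    (hK : 0 < K) {p q : ℕ} (hp : 1 ≤ p) (hq : 2 ≤ q)
    (hpq : (p : ℝ) ≤ q / K ^ (1 / (b * c * Real.logb 2 q ^ (c - 1)))) :
    K * hf b c d p ≤ hf b c d q := by
  set L := Real.logb 2 q
  set l := Real.logb 2 p
  set x := b * c * L ^ (c - 1)
  have hL : 0 < L := Real.logb_pos one_lt_two (by exact_mod_cast hq)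
  have hl : 0 ≤ l := Real.logb_nonneg one_lt_two (by exact_mod_cast hp)
  have hx : 0 < x := by positivity
  have hlK : Real.logb 2 K ≤ x * (L - l) := by
    have := Real.logb_le_logb_of_le one_lt_two (by positivity) hpq
    rw [Real.logb_div (by positivity) (by positivity), Real.logb_rpow_eq_mul_logb_of_pos hK,
      one_div_mul_eq_div, le_sub_iff_add_le, ← le_sub_iff_add_le', div_le_iff₀ hx] at this
    linarith
  have htangent := rpow_le_rpow_add_mul_sub hc0.le hc1 hl hL
  have hexp : Real.logb 2 K + b * l ^ c ≤ b * L ^ c := by nlinarith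
  unfold hf
  calc K * (d * 2 ^ (b * l ^ c)) = d * 2 ^ (Real.logb 2 K + b * l ^ c) := by
        rw [Real.rpow_add two_pos, Real.rpow_logb two_pos (by norm_num) hK]; ring
    _ ≤ d * 2 ^ (b * L ^ c) := by gcongr; norm_num

end Growth

section Extraction

lemma succ_le_choose_add {k : ℕ} (hk : 1 ≤ k) (g : ℕ) : g + 1 ≤ g.choose k + k := by
  induction g with
  | zero => omega
  | succ g ih =>
    obtain ⟨k, rfl⟩ : ∃ k', k = k' + 1 := ⟨k - 1, by omega⟩
    rw [Nat.choose_succ_succ']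
    rcases lt_or_ge g k with hgk | hkg
    · omega
    · have := Nat.choose_pos hkg
      omega

lemma exists_card_eq_common_subset {ι β : Type*} [Fintype ι] [DecidableEq β] {s : Finset β}
    {G : ι → Finset β} (hG : ∀ i, G i ⊆ s) {k m : ℕ}
    (h : (m - 1) * (#s).choose k < ∑ i, (#(G i)).choose k) :
    ∃ T ⊆ s, #T = k ∧ m ≤ #{i | T ⊆ G i} := by
  have hcount : ∑ T ∈ s.powersetCard k, #{i | T ⊆ G i} = ∑ i, (#(G i)).choose k := by
    refine (sum_card_bipartiteAbove_eq_sum_card_bipartiteBelow (r := fun T i => T ⊆ G i)).trans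
      (sum_congr rfl fun i _ => ?_)
    rw [← card_powersetCard]
    congr 1
    ext T
    simp only [bipartiteBelow, mem_filter, mem_powersetCard]
    exact ⟨fun h => ⟨h.2, h.1.2⟩, fun h => ⟨⟨h.1.trans (hG i), h.2⟩, h.1⟩⟩
  rw [← hcount, mul_comm, ← card_powersetCard, ← smul_eq_mul, ← sum_const] at h
  obtain ⟨T, hT, hlt⟩ := exists_lt_of_sum_lt h
  rw [mem_powersetCard] at hT
  exact ⟨T, hT.1, hT.2, by omega⟩

-- The paper's `(k, u)`-complete `m × k w` submatrix of `A`, its column blocks being windows.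
def HasCompleteSubmatrix {n : ℕ} (A : Matrix (Fin n) (Fin n) Bool) (m k w u : ℕ) : Prop :=
  ∃ f : Fin m → Fin n, StrictMono f ∧
    ∃ t : Fin k → ℕ, ∃ ht : ∀ j : Fin k, t j + w ≤ n,
      (∀ j₁ j₂ : Fin k, j₁ < j₂ → t j₁ + w ≤ t j₂) ∧
      ∀ (i : Fin m) (j : Fin k),
        u ≤ #{cc : Fin w | A (f i) ⟨t j + cc, by have := ht j; have := cc.isLt; omega⟩ = true}

variable {n w α k m u : ℕ} {A : Matrix (Fin n) (Fin n) Bool}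

lemma hasCompleteSubmatrix_of_subset_richWindows (hα : α * w ≤ n) {T : Finset ℕ}
    (hT : T ⊆ range α) (hTk : #T = k) (hm : m ≤ #{i | T ⊆ richWindows A w α u i}) :
    HasCompleteSubmatrix A m k w u := by
  obtain ⟨I, hI, hIm⟩ := exists_subset_card_eq hm
  set e := T.orderEmbOfFin hTk
  have hfits (j : Fin k) : e j * w + w ≤ n := by
    have := mem_range.1 (hT (T.orderEmbOfFin_mem hTk j))
    exact (Nat.succ_mul _ w ▸ Nat.mul_le_mul_right w this).trans hα
  refine ⟨I.orderEmbOfFin hIm, (I.orderEmbOfFin hIm).strictMono, fun j => e j * w, hfits,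
    fun j₁ j₂ hj => Nat.succ_mul _ w ▸ Nat.mul_le_mul_right w (e.strictMono hj), fun i j => ?_⟩
  rw [card_filter_window (fun c => A _ c = true) (hfits j)]
  have hrich := (mem_filter.1 (hI (I.orderEmbOfFin_mem hIm i))).2 (T.orderEmbOfFin_mem hTk j)
  exact (mem_filter.1 hrich).2

lemma hasCompleteSubmatrix_of_sum_card_richWindows (hk : 1 ≤ k) (hα : α * w ≤ n)
    (hm : (m - 1) * α ^ k ≤ n) (hpairs : (k + 1) * n < ∑ i, #(richWindows A w α u i)) :
    HasCompleteSubmatrix A m k w u := by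
  have hchoose : ∑ i, #(richWindows A w α u i) + n ≤
      ∑ i, (#(richWindows A w α u i)).choose k + n * k := by
    simpa [sum_add_distrib, mul_comm] using sum_le_sum fun i (_ : i ∈ univ) =>
      succ_le_choose_add hk #(richWindows A w α u i)
  have hmany : (m - 1) * (#(range α)).choose k < ∑ i, (#(richWindows A w α u i)).choose k := by
    rw [card_range]
    nlinarith [Nat.mul_le_mul_left (m - 1) (Nat.choose_le_pow α k)]
  obtain ⟨T, hT, hTk, hTm⟩ := exists_card_eq_common_subset (fun i => filter_subset _ _) hmany
  exact hasCompleteSubmatrix_of_subset_richWindows hα hT hTk hTm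

end Extraction

lemma mul_cast_ceil_div_sub_one_le {x a : ℝ} (hx : 0 ≤ x) (ha : 0 < a) :
    a * ((⌈x / a⌉₊ - 1 : ℕ) : ℝ) ≤ x := by
  rw [mul_comm, ← le_div_iff₀ ha]
  rcases (⌈x / a⌉₊).eq_zero_or_pos with h0 | hpos
  · simpa [h0] using div_nonneg hx ha.le
  · rw [Nat.cast_sub hpos, Nat.cast_one]
    linarith [Nat.ceil_lt_add_one (div_nonneg hx ha.le)]

/-- Let `h = h_{b,c,d}`, `k ≥ 2`, and let `A` be an `n × n` 0-1 matrix
with `w(A) > n·h(n)` all of whose proper submatrices are `h`-sparse. With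
`x = bc(log₂ n)^{c-1}`, `n* = ⌊n/(6k)^{1/x}⌋`, `α = ⌊n/n*⌋`, `m* = ⌈n/α^k⌉`,
`u* = ⌈h(n*)/α⌉`, and assuming `x ≤ 1`, `n* ≥ 1`, `α ≥ k`, the matrix `A` contains an
`m* × kn*` submatrix `C`, obtained by selecting `m*` rows and `k` disjoint blocks of
`n*` consecutive columns, that is `(k,u*)`-complete. -/
theorem statement12 (b c d : ℝ) (hb : 0 < b) (hd : 0 < d) (hc0 : 0 < c) (hc1 : c < 1)
    (k n : ℕ) (hk : 2 ≤ k)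
    (A : Matrix (Fin n) (Fin n) Bool)
    (hw : (n : ℝ) * hf b c d n < (wt A : ℝ))
    (hsp : ∀ (r₁ r₂ : ℕ) (f : Fin r₁ → Fin n) (g : Fin r₂ → Fin n),
      StrictMono f → StrictMono g → (r₁ < n ∨ r₂ < n) →
        HSparse (hf b c d) (fun i j => A (f i) (g j)))
    (x : ℝ) (hxdef : x = b * c * Real.logb 2 (n : ℝ) ^ (c - 1))
    (n' : ℕ) (hn'def : n' = ⌊(n : ℝ) / (6 * (k : ℝ)) ^ (1 / x)⌋₊)
    (α : ℕ) (hαdef : α = n / n')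
    (m' : ℕ) (hm'def : m' = ⌈(n : ℝ) / (α : ℝ) ^ k⌉₊)
    (u' : ℕ) (hu'def : u' = ⌈hf b c d n' / (α : ℝ)⌉₊)
    (hn'1 : 1 ≤ n') (hαk : k ≤ α) :
    ∃ f : Fin m' → Fin n, StrictMono f ∧
      ∃ t : Fin k → ℕ, ∃ ht : ∀ j : Fin k, t j + n' ≤ n,
        (∀ j₁ j₂ : Fin k, j₁ < j₂ → t j₁ + n' ≤ t j₂) ∧
        ∀ (i : Fin m') (j : Fin k),
          u' ≤ (Finset.univ.filter (fun cc : Fin n' =>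
            A (f i) ⟨t j + (cc : ℕ), by have := ht j; have := cc.isLt; omega⟩ = true)).card := by
  have h2n' : 2 * n' ≤ n := (Nat.le_div_iff_mul_le hn'1).1 (hαdef ▸ hk.trans hαk)
  have hα : α * n' ≤ n := hαdef ▸ Nat.div_mul_le_self n n'
  have hαsucc : n < α * n' + n' := hαdef ▸ Nat.lt_div_mul_add hn'1
  have hαpos : (0 : ℝ) < α := by exact_mod_cast (by omega : 0 < α)
  have hgrowth : 6 * k * hf b c d n' ≤ hf b c d n :=
    mul_hf_le_hf hb hd.le hc0 hc1.le (by positivity) hn'1 (by omega)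
      (hxdef ▸ hn'def ▸ Nat.floor_le (by positivity))
  have hwt := wt_le_of_richWindows hsp (hf_monotone hb.le hc0.le hd.le)
    (fun p => (hf_pos hd p).le) hn'1 (by omega) hα hαsucc
    (hu'def ▸ mul_cast_ceil_div_sub_one_le (hf_pos hd n').le hαpos)
  have hpairs : (k + 1) * n < ∑ i, #(richWindows A n' α u' i) := by
    have hn : (0 : ℝ) ≤ n := n.cast_nonneg
    have hkR : (2 : ℝ) ≤ k := mod_cast hk
    have h6k : (6 * k * n : ℝ) < ∑ i, #(richWindows A n' α u' i) + 4 * n :=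
      lt_of_mul_lt_mul_right (by nlinarith) (hf_pos hd n').le
    exact_mod_cast (by nlinarith : ((k + 1) * n : ℝ) < ∑ i, #(richWindows A n' α u' i))
  have hm : (m' - 1) * α ^ k ≤ n := by
    have := hm'def ▸ mul_cast_ceil_div_sub_one_le n.cast_nonneg (pow_pos hαpos k)
    rw [mul_comm] at this
    exact_mod_cast this
  exact hasCompleteSubmatrix_of_sum_card_richWindows (by omega) hα hm hpairs
end
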